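/- Let G be a chordal graph with clique tree T = (K_G, E_T), p the CSMA product-form distribution with back-off rates ν_i, and p_i(1) the marginal probability that x_i = 1. Assuming the junction-tree factorization of p over T, for every vertex i: ν_i = p_i(1) · [∏_{(K,K')∈E_T: i∈K∩K'} (1 − ∑_{s∈K∩K'} p_s(1))] / [∏_{K∈K_G: i∈K} (1 − ∑_{s∈K} p_s(1))]. -/

import Mathlib

open Finset

variable {V : Type*} [Fintype V] [DecidableEq V]

/-- The separator `K ∩ K'` associated with an unordered pair of cliques. -/
def sep {KG : Finset (Finset V)} (e : Sym2 {K // K ∈ KG}) : Finset V :=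
  Sym2.lift ⟨fun a b => a.val ∩ b.val, fun a b => Finset.inter_comm _ _⟩ e

/-- Unnormalized CSMA weight of a state. -/
noncomputable def csmaWeight (G : SimpleGraph V) [DecidableRel G.Adj] (ν : V → ℝ)
    (x : V → Bool) : ℝ :=
  (∏ i, if x i then ν i else 1) *
    ∏ e ∈ G.edgeFinset, (if ∀ v ∈ e, x v = true then (0 : ℝ) else 1)

/-- Normalizing constant `Z`. -/
noncomputable def csmaZ (G : SimpleGraph V) [DecidableRel G.Adj] (ν : V → ℝ) : ℝ :=
  ∑ x : V → Bool, csmaWeight G ν x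

/-- The CSMA product-form distribution. -/
noncomputable def csmaP (G : SimpleGraph V) [DecidableRel G.Adj] (ν : V → ℝ)
    (x : V → Bool) : ℝ :=
  csmaWeight G ν x / csmaZ G ν

/-- Marginal of `p` on the coordinates in `S`, evaluated at `y`. -/
noncomputable def csmaMarg (G : SimpleGraph V) [DecidableRel G.Adj] (ν : V → ℝ)
    (S : Finset V) (y : V → Bool) : ℝ :=
  ∑ x ∈ Finset.univ.filter (fun x : V → Bool => ∀ i ∈ S, x i = y i), csmaP G ν x

/-- Throughput of link `i`: the marginal probability that `x i = 1`. -/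
noncomputable def csmaOne (G : SimpleGraph V) [DecidableRel G.Adj] (ν : V → ℝ)
    (i : V) : ℝ :=
  csmaMarg G ν {i} (fun _ => true)

/-- `x` is the indicator vector of an independent set of `G`. -/
def IsIndep (G : SimpleGraph V) (x : V → Bool) : Prop :=
  ∀ i j, G.Adj i j → ¬(x i = true ∧ x j = true)

/-
The product-form weights give `p(eᵢ) / p(0) = νᵢ`. Evaluating the junction-tree factorization
at `eᵢ` and at `0` and dividing, every clique or separator `S` contributes the ratio
`p_S(eᵢ|_S) / p_S(0)`. It is `1` when `i ∉ S`, and `p_i(1) / (1 - ∑_{s ∈ S} p_s(1))` when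
`i ∈ S`, because an independent set meets a clique in at most one vertex. The cliques containing
`i` span a subtree of the clique tree, so they outnumber the separators containing `i` by
exactly one, which leaves a single factor `p_i(1)`.
-/

open SimpleGraph

theorem SimpleGraph.IsTree.card_filter_edgeFinset_add_one {α : Type*} [Fintype α] [DecidableEq α]
    {T : SimpleGraph α} [DecidableRel T.Adj] (hT : T.IsTree) (s : Finset α)
    (hs : (T.induce (s : Set α)).Connected) :
    #{e ∈ T.edgeFinset | e.toFinset ⊆ s} + 1 = #s := by
  rw [card_filter_edgeFinset_toFinset_subset,
    (⟨hs, hT.isAcyclic.induce _⟩ : IsTree _).card_edgeFinset]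
  simp

omit [Fintype V] in
lemma mem_sep_iff {KG : Finset (Finset V)} (e : Sym2 {K // K ∈ KG}) (i : V) :
    i ∈ sep e ↔ ∀ K ∈ e, i ∈ K.val := by
  induction e using Sym2.ind
  simp [sep]

omit [Fintype V] in
lemma isClique_sep {G : SimpleGraph V} {KG : Finset (Finset V)}
    (hKG : ∀ K ∈ KG, G.IsClique (K : Set V)) (e : Sym2 {K // K ∈ KG}) :
    G.IsClique (sep e : Set V) := by
  induction e using Sym2.ind with
  | _ K _ => exact (hKG K K.2).subset (coe_subset.mpr inter_subset_left)

lemma card_filter_mem_eq_card_filter_mem_sep_add_one {KG : Finset (Finset V)}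
    {T : SimpleGraph {K // K ∈ KG}} [DecidableRel T.Adj] (hT : T.IsTree) (i : V)
    (hi : (T.induce {K : {K // K ∈ KG} | i ∈ K.val}).Connected) :
    #(KG.filter (fun K => i ∈ K)) = #(T.edgeFinset.filter (fun e => i ∈ sep e)) + 1 := by
  have hcard : #(univ.filter fun K : {K // K ∈ KG} => i ∈ K.val) = #(KG.filter (i ∈ ·)) := by
    rw [univ_eq_attach, filter_attach (i ∈ ·), card_map, card_attach]
  rw [← hcard, ← hT.card_filter_edgeFinset_add_one _ (by rwa [coe_filter_univ])]
  congr 2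
  ext e
  simp [mem_sep_iff, subset_iff]

omit [Fintype V] [DecidableEq V] in
lemma isIndep_false (G : SimpleGraph V) : IsIndep G fun _ => false := by
  simp [IsIndep]

omit [Fintype V] in
lemma isIndep_single (G : SimpleGraph V) (i : V) : IsIndep G fun j => decide (j = i) := by
  rintro a b hab ⟨ha, hb⟩
  simp only [decide_eq_true_eq] at ha hb
  exact G.ne_of_adj hab (ha.trans hb.symm)

section Csma

variable {G : SimpleGraph V} [DecidableRel G.Adj] {ν : V → ℝ}

lemma csmaWeight_of_isIndep {x : V → Bool} (hx : IsIndep G x) :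
    csmaWeight G ν x = ∏ i, if x i then ν i else 1 := by
  rw [csmaWeight, prod_eq_one (s := G.edgeFinset), mul_one]
  intro e he
  induction e using Sym2.ind with
  | _ a b => exact if_neg fun h => hx a b (by simpa using he) ⟨h a (by simp), h b (by simp)⟩

lemma csmaWeight_eq_zero_of_not_isIndep {x : V → Bool} (hx : ¬IsIndep G x) :
    csmaWeight G ν x = 0 := by
  obtain ⟨a, b, hab, ha, hb⟩ : ∃ a b, G.Adj a b ∧ x a = true ∧ x b = true := by
    simpa [IsIndep] using hx
  rw [csmaWeight, prod_eq_zero (i := s(a, b)) (by simpa using hab), mul_zero]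
  exact if_pos fun v hv => by rcases Sym2.mem_iff.mp hv with rfl | rfl <;> assumption

lemma csmaWeight_nonneg (hν : ∀ i, 0 ≤ ν i) (x : V → Bool) : 0 ≤ csmaWeight G ν x := by
  by_cases hx : IsIndep G x
  · rw [csmaWeight_of_isIndep hx]
    exact prod_nonneg fun i _ => by split_ifs <;> simp [hν i]
  · rw [csmaWeight_eq_zero_of_not_isIndep hx]

lemma csmaWeight_false : csmaWeight G ν (fun _ => false) = 1 := by
  simp [csmaWeight_of_isIndep (isIndep_false G)]

lemma csmaZ_pos (hν : ∀ i, 0 ≤ ν i) : 0 < csmaZ G ν :=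
  zero_lt_one.trans_le <| csmaWeight_false (G := G) (ν := ν) ▸
    single_le_sum (fun x _ => csmaWeight_nonneg hν x) (mem_univ _)

lemma csmaP_nonneg (hν : ∀ i, 0 ≤ ν i) (x : V → Bool) : 0 ≤ csmaP G ν x :=
  div_nonneg (csmaWeight_nonneg hν x) (csmaZ_pos hν).le

lemma isIndep_of_csmaP_ne_zero {x : V → Bool} (hx : csmaP G ν x ≠ 0) : IsIndep G x := by
  by_contra h
  exact hx (by rw [csmaP, csmaWeight_eq_zero_of_not_isIndep h, zero_div])

lemma sum_csmaP (hν : ∀ i, 0 ≤ ν i) : ∑ x, csmaP G ν x = 1 := by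
  simp_rw [csmaP, ← sum_div]
  exact div_self (csmaZ_pos hν).ne'

lemma csmaP_false : csmaP G ν (fun _ => false) = (csmaZ G ν)⁻¹ := by
  rw [csmaP, csmaWeight_false, one_div]

lemma csmaP_single (i : V) : csmaP G ν (fun j => decide (j = i)) = ν i / csmaZ G ν := by
  rw [csmaP, csmaWeight_of_isIndep (isIndep_single G i)]
  simp

lemma csmaMarg_congr (S : Finset V) {y y' : V → Bool} (h : ∀ j ∈ S, y j = y' j) :
    csmaMarg G ν S y = csmaMarg G ν S y' := by
  unfold csmaMarg
  congr 1
  exact filter_congr fun x _ => forall₂_congr fun j hj => by rw [h j hj]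

lemma csmaP_le_csmaMarg (hν : ∀ i, 0 ≤ ν i) (S : Finset V) {x y : V → Bool}
    (hxy : ∀ j ∈ S, x j = y j) : csmaP G ν x ≤ csmaMarg G ν S y :=
  single_le_sum (fun z _ => csmaP_nonneg hν z) (by simpa using hxy)

lemma csmaMarg_false_pos (hν : ∀ i, 0 ≤ ν i) (S : Finset V) :
    0 < csmaMarg G ν S (fun _ => false) :=
  (csmaP_false (G := G) ▸ inv_pos.mpr (csmaZ_pos hν)).trans_le
    (csmaP_le_csmaMarg hν S fun _ _ => rfl)

lemma csmaOne_pos (hν : ∀ i, 0 < ν i) (i : V) : 0 < csmaOne G ν i :=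
  (csmaP_single (G := G) i ▸ div_pos (hν i) (csmaZ_pos fun j => (hν j).le)).trans_le
    (csmaP_le_csmaMarg (fun j => (hν j).le) {i} (by simp))

lemma csmaOne_eq_sum (i : V) : csmaOne G ν i = ∑ x, if x i then csmaP G ν x else 0 := by
  simp [csmaOne, csmaMarg, sum_filter]

lemma csmaMarg_single_of_isClique {S : Finset V} (hS : G.IsClique (S : Set V)) {i : V}
    (hi : i ∈ S) : csmaMarg G ν S (fun j => decide (j = i)) = csmaOne G ν i := by
  refine sum_subset (fun x hx => by simpa using (mem_filter.mp hx).2 i hi) fun x hx hx' => ?_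
  by_contra hP
  obtain ⟨j, hj, hxj⟩ : ∃ j ∈ S, x j ≠ decide (j = i) := by simpa using hx'
  have hxi : x i = true := by simpa using hx
  have hji : j ≠ i := by rintro rfl; exact hxj (by simp [hxi])
  exact isIndep_of_csmaP_ne_zero hP j i (hS hj hi hji) ⟨by simpa [hji] using hxj, hxi⟩

lemma csmaMarg_false_add_sum_csmaOne (hν : ∀ i, 0 ≤ ν i) {S : Finset V}
    (hS : G.IsClique (S : Set V)) :
    csmaMarg G ν S (fun _ => false) + ∑ s ∈ S, csmaOne G ν s = 1 := by
  have hsplit : ∀ x, (if ∀ j ∈ S, x j = false then csmaP G ν x else 0) +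
      ∑ s ∈ S, (if x s then csmaP G ν x else 0) = csmaP G ν x := by
    intro x
    by_cases hx : ∀ j ∈ S, x j = false
    · simp +contextual [hx]
    obtain ⟨s₀, hs₀, hxs₀⟩ : ∃ s₀ ∈ S, x s₀ = true := by simpa using hx
    rw [if_neg hx, zero_add, sum_eq_single_of_mem s₀ hs₀ fun s hs hne => ?_, if_pos hxs₀]
    by_cases hP : csmaP G ν x = 0
    · simp [hP]
    -- an independent set meets the clique `S` only in `s₀`
    exact if_neg fun hxs => isIndep_of_csmaP_ne_zero hP s s₀ (hS hs hs₀ hne) ⟨hxs, hxs₀⟩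
  simp_rw [csmaOne_eq_sum, csmaMarg, sum_filter]
  rw [sum_comm, ← sum_add_distrib, ← sum_csmaP (G := G) hν]
  exact sum_congr rfl fun x _ => hsplit x

lemma csmaMarg_single_div_csmaMarg_false (hν : ∀ i, 0 ≤ ν i) {S : Finset V}
    (hS : G.IsClique (S : Set V)) (i : V) :
    csmaMarg G ν S (fun j => decide (j = i)) / csmaMarg G ν S (fun _ => false) =
      if i ∈ S then csmaOne G ν i / (1 - ∑ s ∈ S, csmaOne G ν s) else 1 := by
  split_ifs with hi
  · rw [csmaMarg_single_of_isClique hS hi, ← csmaMarg_false_add_sum_csmaOne hν hS,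
      add_sub_cancel_right]
  · rw [csmaMarg_congr (y' := fun _ => false) S fun j hj => by simp [ne_of_mem_of_not_mem hj hi]]
    exact div_self (csmaMarg_false_pos hν S).ne'

end Csma

/-- Junction-tree expression for the back-off rates `ν i` of the CSMA product-form
distribution on a chordal conflict graph in terms of the throughputs. -/
theorem csma_backoff_junction_tree (G : SimpleGraph V) [DecidableRel G.Adj]
    (KG : Finset (Finset V))
    (hKG : ∀ K : Finset V, K ∈ KG ↔ (G.IsClique (K : Set V) ∧
      ∀ K' : Finset V, G.IsClique (K' : Set V) → K ⊆ K' → K' = K))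
    (T : SimpleGraph {K // K ∈ KG}) [DecidableRel T.Adj] (hT : T.IsTree)
    (hsub : ∀ v : V, (T.induce {K : {K // K ∈ KG} | v ∈ K.val}).Connected)
    (ν : V → ℝ) (hν : ∀ i, 0 < ν i)
    (hfact : ∀ x : V → Bool, IsIndep G x →
      csmaP G ν x = (∏ K ∈ KG, csmaMarg G ν K x) /
        ∏ e ∈ T.edgeFinset, csmaMarg G ν (sep e) x) :
    ∀ i : V, ν i = csmaOne G ν i *
      (∏ e ∈ T.edgeFinset.filter (fun e => i ∈ sep e),
        (1 - ∑ s ∈ sep e, csmaOne G ν s)) /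
      ∏ K ∈ KG.filter (fun K => i ∈ K), (1 - ∑ s ∈ K, csmaOne G ν s) := by
  intro i
  have hν₀ : ∀ j, 0 ≤ ν j := fun j => (hν j).le
  have hclique : ∀ K ∈ KG, G.IsClique (K : Set V) := fun K hK => ((hKG K).mp hK).1
  set M := fun (S : Finset V) =>
    csmaMarg G ν S (fun j => decide (j = i)) / csmaMarg G ν S (fun _ => false) with hM
  have hratio : ν i = (∏ K ∈ KG, M K) / ∏ e ∈ T.edgeFinset, M (sep e) := by
    rw [hM, prod_div_distrib, prod_div_distrib, div_div_div_comm,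
      ← hfact _ (isIndep_single G i), ← hfact _ (isIndep_false G), csmaP_single, csmaP_false,
      div_inv_eq_mul, div_mul_cancel₀ _ (csmaZ_pos hν₀).ne']
  rw [hratio, hM,
    prod_congr rfl fun K hK => csmaMarg_single_div_csmaMarg_false hν₀ (hclique K hK) i,
    prod_congr rfl fun e _ => csmaMarg_single_div_csmaMarg_false hν₀ (isClique_sep hclique e) i,
    ← prod_filter, ← prod_filter, prod_div_distrib, prod_div_distrib, prod_const, prod_const,
    card_filter_mem_eq_card_filter_mem_sep_add_one hT i (hsub i), pow_succ]
  have hi := (csmaOne_pos (G := G) hν i).ne'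
  field_simp
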